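/- Let θ be a real skew-symmetric n × n matrix and let F be a group acting on ℤ^n by automorphisms such that each element of F acts by a matrix W ∈ GL_n(ℤ) with Wᵀ θ W = θ. Then the map ω'_θ on G = ℤ^n ⋊ F defined by ω'_θ((x,s),(y,t)) = exp(2πi ⟨-θx, s·y⟩) is a 2-cocycle on G. -/

import Mathlib

/-!
Write `b(v, w) = -(θ v) ⬝ w`, so that `ω'_θ((x,s),(y,t)) = exp(2πi b(x, s·y))`. Since `b` is
bilinear, the cocycle identity for the exponents reduces to `b(s·y, s·w) = b(y, w)`, i.e. to
`sᵀ θᵀ s = θᵀ`, the transpose of `sᵀ θ s = θ`. Both normalisations hold because `b` vanishes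
when either argument is `0`.
-/

open Matrix

namespace Matrix

variable {ι R : Type*} [Fintype ι] [CommRing R]

theorem mulVec_mulVec_dotProduct_mulVec {θ M : Matrix ι ι R} (hM : Mᵀ * θ * M = θ)
    (v w : ι → R) : (θ *ᵥ (M *ᵥ v)) ⬝ᵥ (M *ᵥ w) = (θ *ᵥ v) ⬝ᵥ w := by
  have hMt : Mᵀ * θᵀ * M = θᵀ := by
    simpa only [transpose_mul, transpose_transpose, Matrix.mul_assoc] using congrArg transpose hM
  rw [mulVec_mulVec, ← vecMul_transpose, ← vecMul_transpose θ, dotProduct_mulVec, vecMul_vecMul,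
    transpose_mul, hMt]

theorem neg_mulVec_dotProduct_cocycle {θ M : Matrix ι ι R} (hM : Mᵀ * θ * M = θ)
    (N : Matrix ι ι R) (x y z : ι → R) :
    -(θ *ᵥ x) ⬝ᵥ (M *ᵥ y) + -(θ *ᵥ (x + M *ᵥ y)) ⬝ᵥ ((M * N) *ᵥ z)
      = -(θ *ᵥ x) ⬝ᵥ (M *ᵥ (y + N *ᵥ z)) + -(θ *ᵥ y) ⬝ᵥ (N *ᵥ z) := by
  simp only [mulVec_add, ← mulVec_mulVec, neg_add, add_dotProduct, dotProduct_add, neg_dotProduct]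
  linear_combination -mulVec_mulVec_dotProduct_mulVec hM y (N *ᵥ z)

theorem intCast_mulVec_eq_map_mulVec (C : Matrix ι ι ℤ) (v : ι → ℤ) :
    (fun j => ((C *ᵥ v) j : R)) = C.map ((↑) : ℤ → R) *ᵥ fun j => (v j : R) :=
  funext (RingHom.map_mulVec (Int.castRingHom R) C v)

/-- The exponent `⟨-θx, s·y⟩` of `ω'_θ((x,s),(y,t))`, where `s` acts by the integer matrix `A`. -/
def cocyclePhase (θ : Matrix ι ι R) (A : Matrix ι ι ℤ) (x y : ι → ℤ) : R :=
  ∑ i, (-(θ *ᵥ fun j => (x j : R))) i * ((A *ᵥ y) i : R)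

theorem cocyclePhase_eq_dotProduct (θ : Matrix ι ι R) (A : Matrix ι ι ℤ) (x y : ι → ℤ) :
    cocyclePhase θ A x y
      = -(θ *ᵥ fun j => (x j : R)) ⬝ᵥ (A.map ((↑) : ℤ → R) *ᵥ fun j => (y j : R)) := by
  rw [← intCast_mulVec_eq_map_mulVec]
  rfl

theorem cocyclePhase_cocycle {θ : Matrix ι ι R} {A : Matrix ι ι ℤ}
    (hA : (A.map ((↑) : ℤ → R))ᵀ * θ * A.map ((↑) : ℤ → R) = θ) (B : Matrix ι ι ℤ)
    (x y z : ι → ℤ) :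
    cocyclePhase θ A x y + cocyclePhase θ (A * B) (x + A *ᵥ y) z
      = cocyclePhase θ A x (y + B *ᵥ z) + cocyclePhase θ B y z := by
  have hadd : ∀ v w : ι → ℤ,
      (fun j => ((v + w) j : R)) = (fun j => (v j : R)) + fun j => (w j : R) :=
    fun v w => funext fun j => Int.cast_add (v j) (w j)
  have hmul : (A * B).map ((↑) : ℤ → R) = A.map (↑) * B.map (↑) :=
    Matrix.map_mul (f := Int.castRingHom R)
  simp only [cocyclePhase_eq_dotProduct, hadd, intCast_mulVec_eq_map_mulVec, hmul]
  exact neg_mulVec_dotProduct_cocycle hA _ _ _ _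

theorem cocyclePhase_zero_left (θ : Matrix ι ι R) (A : Matrix ι ι ℤ) (y : ι → ℤ) :
    cocyclePhase θ A 0 y = 0 := by
  simp [cocyclePhase, ← Pi.zero_def]

theorem cocyclePhase_zero_right (θ : Matrix ι ι R) (A : Matrix ι ι ℤ) (x : ι → ℤ) :
    cocyclePhase θ A x 0 = 0 := by
  simp [cocyclePhase]

end Matrix

theorem stmt1_general (n : ℕ) (θ : Matrix (Fin n) (Fin n) ℝ)
    (F : Type*) [Group F] (φ : F →* Matrix (Fin n) (Fin n) ℤ)
    (hsymp : ∀ s : F,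
      ((φ s).map ((↑) : ℤ → ℝ))ᵀ * θ * ((φ s).map ((↑) : ℤ → ℝ)) = θ)
    (ω : ((Fin n → ℤ) × F) → ((Fin n → ℤ) × F) → ℂ)
    (hω : ∀ g h : (Fin n → ℤ) × F, ω g h =
      Complex.exp ((2 * Real.pi *
        (∑ i, (-(θ.mulVec fun j => (g.1 j : ℝ))) i * (((φ g.2).mulVec h.1) i : ℝ)) : ℝ)
        * Complex.I))
    (mul : ((Fin n → ℤ) × F) → ((Fin n → ℤ) × F) → ((Fin n → ℤ) × F))
    (hmul : ∀ g h, mul g h = (g.1 + (φ g.2).mulVec h.1, g.2 * h.2)) :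
    (∀ g h k, ω g h * ω (mul g h) k = ω g (mul h k) * ω h k) ∧
    (∀ g, ω g (0, 1) = 1) ∧ (∀ g, ω (0, 1) g = 1) := by
  have hω' : ∀ g h, ω g h
      = Complex.exp ((2 * Real.pi * cocyclePhase θ (φ g.2) g.1 h.1 : ℝ) * Complex.I) := hω
  refine ⟨fun g h k => ?_, fun g => ?_, fun g => ?_⟩
  · simp only [hω', hmul, ← Complex.exp_add, ← add_mul, ← Complex.ofReal_add, ← mul_add,
      map_mul, cocyclePhase_cocycle (hsymp g.2)]
  · simp [hω', cocyclePhase_zero_right]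
  · simp [hω', cocyclePhase_zero_left]

/-- For `θ` real skew-symmetric and a group `F` acting on `ℤ^n` through integer matrices
`φ s` satisfying `(φ s)ᵀ θ (φ s) = θ`, the map
`ω'_θ((x,s),(y,t)) = exp(2πi ⟨-θx, s·y⟩)` is a 2-cocycle on the semidirect product
`ℤ^n ⋊ F`, whose multiplication is `(x,s)(y,t) = (x + s·y, st)`. -/
theorem stmt1 (n : ℕ) (θ : Matrix (Fin n) (Fin n) ℝ) (hθ : θᵀ = -θ)
    (F : Type*) [Group F] (φ : F →* Matrix (Fin n) (Fin n) ℤ)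
    (hsymp : ∀ s : F,
      ((φ s).map ((↑) : ℤ → ℝ))ᵀ * θ * ((φ s).map ((↑) : ℤ → ℝ)) = θ)
    (ω : ((Fin n → ℤ) × F) → ((Fin n → ℤ) × F) → ℂ)
    (hω : ∀ g h : (Fin n → ℤ) × F, ω g h =
      Complex.exp ((2 * Real.pi *
        (∑ i, (-(θ.mulVec fun j => (g.1 j : ℝ))) i * (((φ g.2).mulVec h.1) i : ℝ)) : ℝ)
        * Complex.I))
    (mul : ((Fin n → ℤ) × F) → ((Fin n → ℤ) × F) → ((Fin n → ℤ) × F))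
    (hmul : ∀ g h, mul g h = (g.1 + (φ g.2).mulVec h.1, g.2 * h.2)) :
    (∀ g h k, ω g h * ω (mul g h) k = ω g (mul h k) * ω h k) ∧
    (∀ g, ω g (0, 1) = 1) ∧ (∀ g, ω (0, 1) g = 1) :=
  stmt1_general n θ F φ hsymp ω hω mul hmul
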